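/- Let δ, λ > 0 and let V ∈ ℝ^{n×n} be symmetric with eigendecomposition V = T Λ Tᵀ, where T is orthogonal (T Tᵀ = I_n) and Λ is diagonal. Then the matrix L* = T · diag((Λ_{11} − λδ)_+, …, (Λ_{nn} − λδ)_+) · Tᵀ, where (x)_+ = max(x,0), is a global minimizer of the function L ↦ δ‖L‖_* + (1/(2λ))‖L − V‖_F² over the set of symmetric positive semidefinite n×n matrices L. -/

import Mathlib

/-!
Conjugation by the orthogonal `T` preserves the trace, the Frobenius norm and positive
semidefiniteness, so one may take `V = Λ` diagonal. On positive semidefinite matrices the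
nuclear norm is the trace. The off-diagonal entries of `L` then only increase `‖L - Λ‖_F`, and
the diagonal decouples into the scalar problems `min_{a ≥ 0} 2ta + (a - c)²` with `t = λδ`,
solved by `a = (c - t)₊`.
-/

open Matrix BigOperators Finset

noncomputable section

namespace CitNet

variable {n : ℕ}

/-- Frobenius norm of a real matrix. -/
def frob (A : Matrix (Fin n) (Fin n) ℝ) : ℝ :=
  Real.sqrt (∑ i, ∑ j, (A i j) ^ 2)

/-- Elementwise ℓ1 norm. -/
def l1 (A : Matrix (Fin n) (Fin n) ℝ) : ℝ :=
  ∑ i, ∑ j, |A i j|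

/-- Elementwise sup norm. -/
def supNorm (A : Matrix (Fin n) (Fin n) ℝ) : ℝ :=
  ⨆ i, ⨆ j, |A i j|

/-- Trace inner product. -/
def tinner (A B : Matrix (Fin n) (Fin n) ℝ) : ℝ :=
  Matrix.trace (Aᵀ * B)

/-- Nuclear norm: trace of the PSD square root of AᴴA. -/
def nuclearNorm (A : Matrix (Fin n) (Fin n) ℝ) : ℝ :=
  ((Matrix.posSemidef_conjTranspose_mul_self A).1.eigenvectorUnitary.1 *
    Matrix.diagonal ((RCLike.ofReal : ℝ → ℝ) ∘ (√·) ∘ (Matrix.posSemidef_conjTranspose_mul_self A).1.eigenvalues) *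
    (star (Matrix.posSemidef_conjTranspose_mul_self A).1.eigenvectorUnitary :
      Matrix (Fin n) (Fin n) ℝ)).trace

/-- Singular values in decreasing order: `svDesc A j` is σ_{j+1}(A). -/
def svDesc (A : Matrix (Fin n) (Fin n) ℝ) : Fin n → ℝ := fun j =>
  Real.sqrt ((Matrix.isHermitian_conjTranspose_mul_self A : (Aᵀ * A).IsHermitian).eigenvalues
    (Tuple.sort (Matrix.isHermitian_conjTranspose_mul_self A :
      (Aᵀ * A).IsHermitian).eigenvalues j.rev))

/-- Operator norm: largest singular value. -/
def opNorm (A : Matrix (Fin n) (Fin n) ℝ) : ℝ :=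
  ⨆ j, svDesc A j

/-- The all-ones matrix 𝟙𝟙ᵀ. -/
def onesMat : Matrix (Fin n) (Fin n) ℝ :=
  Matrix.of fun _ _ => (1 : ℝ)

/-- The centering matrix J = I − (1/n)𝟙𝟙ᵀ. -/
def Jmat (n : ℕ) : Matrix (Fin n) (Fin n) ℝ :=
  1 - (n : ℝ)⁻¹ • onesMat

/-- Restriction of a matrix to an index set. -/
def restrict (A : Matrix (Fin n) (Fin n) ℝ) (Ω : Finset (Fin n × Fin n)) :
    Matrix (Fin n) (Fin n) ℝ :=
  Matrix.of fun i j => if (i, j) ∈ Ω then A i j else 0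

/-- The logistic (sigmoid) matrix P(Θ). -/
def logis (Θ : Matrix (Fin n) (Fin n) ℝ) : Matrix (Fin n) (Fin n) ℝ :=
  Matrix.of fun i j => Real.exp (Θ i j) / (1 + Real.exp (Θ i j))

/-- Negative log-likelihood function h. -/
def hfun (X Θ : Matrix (Fin n) (Fin n) ℝ) : ℝ :=
  -(1 / (n : ℝ)) * ∑ i, ∑ j, (X i j * Θ i j - Real.log (1 + Real.exp (Θ i j)))

lemma frob_sq_eq_sum (A : Matrix (Fin n) (Fin n) ℝ) : frob A ^ 2 = ∑ i, ∑ j, A i j ^ 2 :=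
  Real.sq_sqrt (by positivity)

lemma frob_sq_eq_trace (A : Matrix (Fin n) (Fin n) ℝ) : frob A ^ 2 = trace (Aᵀ * A) := by
  rw [frob_sq_eq_sum, Finset.sum_comm]
  simp [Matrix.trace, Matrix.mul_apply, sq]

lemma frob_sq_diagonal (d : Fin n → ℝ) : frob (diagonal d) ^ 2 = ∑ i, d i ^ 2 := by
  rw [frob_sq_eq_sum]
  refine Finset.sum_congr rfl fun i _ => ?_
  rw [Finset.sum_eq_single i (fun j _ hj => by simp [diagonal_apply_ne _ hj.symm]) (by simp)]
  simp

lemma sum_sq_diag_le_frob_sq (A : Matrix (Fin n) (Fin n) ℝ) : ∑ i, A i i ^ 2 ≤ frob A ^ 2 := by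
  rw [frob_sq_eq_sum]
  exact Finset.sum_le_sum fun i _ =>
    Finset.single_le_sum (f := fun j => A i j ^ 2) (fun _ _ => sq_nonneg _) (Finset.mem_univ i)

open scoped MatrixOrder in
lemma nuclearNorm_eq_trace {L : Matrix (Fin n) (Fin n) ℝ} (hL : L.PosSemidef) :
    nuclearNorm L = L.trace := by
  have hLL := posSemidef_conjTranspose_mul_self L
  have hsqrt : hLL.1.eigenvectorUnitary.1 *
      diagonal ((RCLike.ofReal : ℝ → ℝ) ∘ (√·) ∘ hLL.1.eigenvalues) *
      (star hLL.1.eigenvectorUnitary : Matrix (Fin n) (Fin n) ℝ) = cfc Real.sqrt (Lᴴ * L) := by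
    rw [hLL.1.cfc_eq]; rfl
  have hLL' : (L * L).PosSemidef := by rwa [hL.1.eq] at hLL
  unfold nuclearNorm
  rw [hsqrt, hL.1.eq, ← cfcₙ_eq_cfc, ← CFC.sqrt_eq_real_sqrt (L * L) hLL'.nonneg,
    CFC.sqrt_mul_self L hL.nonneg]

lemma trace_conj_of_orthogonal {T : Matrix (Fin n) (Fin n) ℝ} (hT : Tᵀ * T = 1)
    (M : Matrix (Fin n) (Fin n) ℝ) : trace (T * M * Tᵀ) = trace M := by
  rw [trace_mul_comm, ← Matrix.mul_assoc, hT, Matrix.one_mul]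

lemma frob_conj_of_orthogonal {T : Matrix (Fin n) (Fin n) ℝ} (hT : Tᵀ * T = 1)
    (M : Matrix (Fin n) (Fin n) ℝ) : frob (T * M * Tᵀ) = frob M := by
  have hsq : frob (T * M * Tᵀ) ^ 2 = frob M ^ 2 := by
    rw [frob_sq_eq_trace, frob_sq_eq_trace, ← trace_conj_of_orthogonal hT (Mᵀ * M)]
    simp only [transpose_mul, transpose_transpose, Matrix.mul_assoc]
    rw [← Matrix.mul_assoc Tᵀ T, hT, Matrix.one_mul]
  exact (pow_left_inj₀ (Real.sqrt_nonneg _) (Real.sqrt_nonneg _) two_ne_zero).mp hsq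

lemma soft_threshold_le (t c a : ℝ) (ha : 0 ≤ a) :
    2 * t * max (c - t) 0 + (max (c - t) 0 - c) ^ 2 ≤ 2 * t * a + (a - c) ^ 2 := by
  rcases le_total (c - t) 0 with h | h
  · rw [max_eq_right h]; nlinarith
  · rw [max_eq_left h]; nlinarith [sq_nonneg (a - (c - t))]

lemma soft_threshold_diagonal_le (t : ℝ) (c : Fin n → ℝ) {B : Matrix (Fin n) (Fin n) ℝ}
    (hB : B.PosSemidef) :
    2 * t * trace (diagonal fun i => max (c i - t) 0)
        + frob (diagonal (fun i => max (c i - t) 0) - diagonal c) ^ 2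
      ≤ 2 * t * trace B + frob (B - diagonal c) ^ 2 := by
  rw [diagonal_sub, frob_sq_diagonal, trace_diagonal, Finset.mul_sum, ← Finset.sum_add_distrib]
  calc ∑ i, (2 * t * max (c i - t) 0 + (max (c i - t) 0 - c i) ^ 2)
      ≤ ∑ i, (2 * t * B i i + (B i i - c i) ^ 2) :=
        Finset.sum_le_sum fun i _ => soft_threshold_le t (c i) (B i i) (hB.diag_nonneg)
    _ ≤ 2 * t * trace B + frob (B - diagonal c) ^ 2 := by
        rw [Finset.sum_add_distrib, ← Finset.mul_sum]
        exact add_le_add_right (by simpa using sum_sq_diag_le_frob_sq (B - diagonal c)) _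

theorem stmt17_general (n : ℕ) (δ lam : ℝ) (hlam : 0 < lam)
    (V T Λ : Matrix (Fin n) (Fin n) ℝ)
    (hT : T * Tᵀ = 1) (hΛ : Λ.IsDiag) (hdec : V = T * Λ * Tᵀ) :
    (T * Matrix.diagonal (fun i => max (Λ i i - lam * δ) 0) * Tᵀ).PosSemidef ∧
    ∀ L : Matrix (Fin n) (Fin n) ℝ, L.PosSemidef →
      δ * nuclearNorm (T * Matrix.diagonal (fun i => max (Λ i i - lam * δ) 0) * Tᵀ)
          + (1 / (2 * lam)) *
            (frob (T * Matrix.diagonal (fun i => max (Λ i i - lam * δ) 0) * Tᵀ - V)) ^ 2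
        ≤ δ * nuclearNorm L + (1 / (2 * lam)) * (frob (L - V)) ^ 2 := by
  have hTT : Tᵀ * T = 1 := mul_eq_one_comm.mp hT
  set D := diagonal fun i => max (Λ i i - lam * δ) 0
  have hD : (T * D * Tᵀ).PosSemidef := by
    simpa using (PosSemidef.diagonal fun i => le_max_right _ 0).mul_mul_conjTranspose_same T
  refine ⟨hD, fun L hL => ?_⟩
  set B := Tᵀ * L * T
  have hB : B.PosSemidef := by simpa using hL.conjTranspose_mul_mul_same T
  have hLB : L = T * B * Tᵀ := by
    rw [show T * B * Tᵀ = T * Tᵀ * L * (T * Tᵀ) by simp only [B, Matrix.mul_assoc], hT,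
      Matrix.one_mul, Matrix.mul_one]
  have hframe : ∀ M, (T * M * Tᵀ).PosSemidef →
      δ * nuclearNorm (T * M * Tᵀ) + 1 / (2 * lam) * frob (T * M * Tᵀ - V) ^ 2
        = (2 * (lam * δ) * trace M + frob (M - Λ) ^ 2) / (2 * lam) := by
    intro M hM
    rw [nuclearNorm_eq_trace hM, trace_conj_of_orthogonal hTT, hdec, ← Matrix.sub_mul,
      ← Matrix.mul_sub, frob_conj_of_orthogonal hTT]
    field_simp
  rw [hLB, hframe D hD, hframe B (hLB ▸ hL)]
  gcongr ?_ / _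
  have := soft_threshold_diagonal_le (lam * δ) (diag Λ) hB
  rwa [hΛ.diagonal_diag] at this

/-- singular-value soft-thresholding solves the nuclear-norm proximal problem
over symmetric PSD matrices. -/
theorem stmt17 (n : ℕ) (δ lam : ℝ) (hδ : 0 < δ) (hlam : 0 < lam)
    (V T Λ : Matrix (Fin n) (Fin n) ℝ) (hV : V.IsSymm)
    (hT : T * Tᵀ = 1) (hΛ : Λ.IsDiag) (hdec : V = T * Λ * Tᵀ) :
    (T * Matrix.diagonal (fun i => max (Λ i i - lam * δ) 0) * Tᵀ).PosSemidef ∧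
    ∀ L : Matrix (Fin n) (Fin n) ℝ, L.PosSemidef →
      δ * nuclearNorm (T * Matrix.diagonal (fun i => max (Λ i i - lam * δ) 0) * Tᵀ)
          + (1 / (2 * lam)) *
            (frob (T * Matrix.diagonal (fun i => max (Λ i i - lam * δ) 0) * Tᵀ - V)) ^ 2
        ≤ δ * nuclearNorm L + (1 / (2 * lam)) * (frob (L - V)) ^ 2 :=
  stmt17_general n δ lam hlam V T Λ hT hΛ hdec

end CitNet
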